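/- arXiv:1305.3562 — 3 statements merged into one kernel-verified Lean document; each statement's English description precedes it below -/
import Mathlib

section
/- Let α > 0 and k be real numbers, and let (τ_j) and (ξ_j) be sequences of positive reals with τ_j → 0, ξ_j → 0 and ξ_j/τ_j → k as j → ∞. Then for all fixed real t and x, the sequence j ↦ (ξ_j²/(α·τ_j) + 1)^{t/τ_j + x/ξ_j} (real power of a positive base) tends to exp(k²·t/α + k·x/α). -/
open Filter Topology Real

/-!
Write the base as `1 + y` with `y = ξ²/(ατ) = (ξ/τ) · ξ/α → 0`. Since `log (1 + y) ~ y`, the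
logarithm of the power is asymptotic to `y · (t/τ + x/ξ) = (ξ/τ)² t/α + (ξ/τ) x/α`, which tends
to `k² t/α + k x/α`.
-/

theorem Real.tendsto_log_one_add_div_self :
    Tendsto (fun y : ℝ => log (1 + y) / y) (𝓝[≠] 0) (𝓝 1) := by
  have hlog : HasDerivAt log 1 1 := by simpa using hasDerivAt_log one_ne_zero
  refine (hasDerivAt_iff_tendsto_slope_zero.mp hlog).congr fun y => ?_
  rw [log_one, sub_zero, smul_eq_mul, inv_mul_eq_div]

theorem tendsto_one_add_rpow_exp_of_tendsto_mul {ι : Type*} {l : Filter ι} {y s : ι → ℝ}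
    {L : ℝ} (hy : Tendsto y l (𝓝[≠] 0)) (hys : Tendsto (fun i => y i * s i) l (𝓝 L)) :
    Tendsto (fun i => (1 + y i) ^ s i) l (𝓝 (exp L)) := by
  have hlog : Tendsto (fun i => log (1 + y i) * s i) l (𝓝 L) := by
    have h := (tendsto_log_one_add_div_self.comp hy).mul hys
    rw [one_mul] at h
    refine h.congr' ?_
    filter_upwards [hy self_mem_nhdsWithin] with i (hi : y i ≠ 0)
    simp only [Function.comp_apply]
    field_simp
  have hpos : ∀ᶠ i in l, 0 < 1 + y i := by
    have h : Tendsto (fun i => 1 + y i) l (𝓝 (1 + 0)) :=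
      tendsto_const_nhds.add (tendsto_nhds_of_tendsto_nhdsWithin hy)
    rw [add_zero] at h
    exact h.eventually (lt_mem_nhds one_pos)
  refine ((continuous_exp.tendsto L).comp hlog).congr' ?_
  filter_upwards [hpos] with i hi
  rw [Function.comp_apply, rpow_def_of_pos hi]

theorem nonlimit_heat_tendsto_exp_general (α k : ℝ) (hα : 0 < α)
    (τ ξ : ℕ → ℝ) (hτpos : ∀ j, 0 < τ j) (hξpos : ∀ j, 0 < ξ j)
    (hξ0 : Tendsto ξ atTop (nhds 0))
    (hratio : Tendsto (fun j => ξ j / τ j) atTop (nhds k)) :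
    ∀ t x : ℝ,
      Tendsto (fun j => ((ξ j) ^ 2 / (α * τ j) + 1) ^ (t / τ j + x / ξ j)) atTop
        (nhds (Real.exp (k ^ 2 * t / α + k * x / α))) := by
  intro t x
  have hy : Tendsto (fun j => ξ j ^ 2 / (α * τ j)) atTop (𝓝[≠] 0) := by
    have h : Tendsto (fun j => ξ j / τ j * ξ j / α) atTop (𝓝 (k * 0 / α)) :=
      (hratio.mul hξ0).div_const α
    rw [mul_zero, zero_div] at h
    refine tendsto_nhdsWithin_of_tendsto_nhds_of_eventually_within _
      (h.congr fun j => by ring) (Eventually.of_forall fun j => ?_)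
    exact (div_pos (pow_pos (hξpos j) 2) (mul_pos hα (hτpos j))).ne'
  have hys : Tendsto (fun j => ξ j ^ 2 / (α * τ j) * (t / τ j + x / ξ j)) atTop
      (𝓝 (k ^ 2 * t / α + k * x / α)) := by
    refine (((hratio.pow 2).mul_const t).div_const α |>.add
      ((hratio.mul_const x).div_const α)).congr fun j => ?_
    have := (hτpos j).ne'
    have := (hξpos j).ne'
    field_simp
  simpa only [add_comm _ (1 : ℝ)] using tendsto_one_add_rpow_exp_of_tendsto_mul hy hys

/-- The non-limit heat-equation solution `(ξ²/(ατ) + 1)^{t/τ + x/ξ}` tends to the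
classical solution `exp(k²t/α + kx/α)` as the steps `τ, ξ → 0` with `ξ/τ → k`. -/
theorem nonlimit_heat_tendsto_exp (α k : ℝ) (hα : 0 < α)
    (τ ξ : ℕ → ℝ) (hτpos : ∀ j, 0 < τ j) (hξpos : ∀ j, 0 < ξ j)
    (hτ0 : Tendsto τ atTop (nhds 0)) (hξ0 : Tendsto ξ atTop (nhds 0))
    (hratio : Tendsto (fun j => ξ j / τ j) atTop (nhds k)) :
    ∀ t x : ℝ,
      Tendsto (fun j => ((ξ j) ^ 2 / (α * τ j) + 1) ^ (t / τ j + x / ξ j)) atTop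
        (nhds (Real.exp (k ^ 2 * t / α + k * x / α))) :=
  nonlimit_heat_tendsto_exp_general α k hα τ ξ hτpos hξpos hξ0 hratio
end

section
/- Let τ > 0, k > 0, λ, ω be real numbers, let y : ℝ → ℝ, and define x : ℝ → ℝ by x(t) = k^{y(t)}. Then for every t ∈ ℝ, the non-limit van der Pol equation Dτ(Dτx)(t) − λ·(1 − x(t)²)·Dτx(t) + ω²·x(t) = 0 holds if and only if k^{τ²·ÿ(t) + 2τ·ẏ(t)} − (2 + λτ)·k^{τ·ẏ(t)} + λτ·k^{τ·ẏ(t) + 2·y(t)} − λτ·k^{2·y(t)} + 1 + λτ + τ²·ω² = 0, where ẏ = Dτy and ÿ = Dτ(Dτy). -/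
/-- The non-limit derivative with step `τ`. -/
noncomputable def nlDeriv (τ : ℝ) (f : ℝ → ℝ) : ℝ → ℝ := fun t => (f (t + τ) - f t) / τ

/-- For `x(t) = k^{y(t)}`, the non-limit van der Pol equation
`ẍ − λ(1 − x²)ẋ + ω²x = 0` is equivalent to
`k^{τ²ÿ + 2τẏ} − (2 + λτ)k^{τẏ} + λτk^{τẏ + 2y} − λτk^{2y} + 1 + λτ + τ²ω² = 0`. -/
theorem vanderPol_nlDeriv_substitution (τ k lam ω : ℝ) (hτ : 0 < τ) (hk : 0 < k)
    (y : ℝ → ℝ) (x : ℝ → ℝ) (hx : ∀ t, x t = k ^ y t) :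
    ∀ t : ℝ,
      (nlDeriv τ (nlDeriv τ x) t - lam * (1 - x t ^ 2) * nlDeriv τ x t + ω ^ 2 * x t = 0 ↔
        k ^ (τ ^ 2 * nlDeriv τ (nlDeriv τ y) t + 2 * τ * nlDeriv τ y t)
          - (2 + lam * τ) * k ^ (τ * nlDeriv τ y t)
          + lam * τ * k ^ (τ * nlDeriv τ y t + 2 * y t)
          - lam * τ * k ^ (2 * y t)
          + 1 + lam * τ + τ ^ 2 * ω ^ 2 = 0) := by
  intro t
  have hτ0 : τ ≠ 0 := ne_of_gt hτ
  have hA : (0 : ℝ) < k ^ y t := Real.rpow_pos_of_pos hk _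
  have e1 : τ ^ 2 * nlDeriv τ (nlDeriv τ y) t + 2 * τ * nlDeriv τ y t
      = y (t + τ + τ) - y t := by
    simp only [nlDeriv]; field_simp; ring
  have e2 : τ * nlDeriv τ y t = y (t + τ) - y t := by
    simp only [nlDeriv]; field_simp
  have e3 : τ * nlDeriv τ y t + 2 * y t = y (t + τ) + y t := by
    rw [e2]; ring
  have key : k ^ (τ ^ 2 * nlDeriv τ (nlDeriv τ y) t + 2 * τ * nlDeriv τ y t)
          - (2 + lam * τ) * k ^ (τ * nlDeriv τ y t)
          + lam * τ * k ^ (τ * nlDeriv τ y t + 2 * y t)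
          - lam * τ * k ^ (2 * y t)
          + 1 + lam * τ + τ ^ 2 * ω ^ 2
      = (τ ^ 2 / k ^ y t) *
        (nlDeriv τ (nlDeriv τ x) t - lam * (1 - x t ^ 2) * nlDeriv τ x t + ω ^ 2 * x t) := by
    rw [e1, e3, e2]
    simp only [nlDeriv, hx]
    rw [Real.rpow_sub hk, Real.rpow_sub hk, Real.rpow_add hk, two_mul,
      Real.rpow_add hk]
    field_simp
    ring
  constructor
  · intro h
    rw [key, h, mul_zero]
  · intro h
    rw [key] at h
    rcases mul_eq_zero.mp h with h' | h'
    · exact absurd h' (ne_of_gt (div_pos (by positivity) hA))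
    · exact h'
end

section
/- Let τ > 0, λ, ω be real numbers with λ·τ > 0, set Ω = 1 + ω²·τ²/(2·(2 + λτ)) and A = √((2 + λτ)/(λτ)), and let B > 0 be a real number with B⁴ − 2·Ω·B² + 1 = 0 (i.e., B² = Ω ± √(Ω² − 1)). Define x : ℤ → ℝ by x(n) = A·B if n is even and x(n) = A/B if n is odd. Then x solves the discrete van der Pol equation: for all n ∈ ℤ, (x(n+2) − 2·x(n+1) + x(n))/τ² − λ·(1 − x(n)²)·(x(n+1) − x(n))/τ + ω²·x(n) = 0. -/
/-!
On a sequence of period two the discrete van der Pol equation collapses to one algebraic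
equation in the pair `(x n, x (n + 1))`. With `x n = A C` and `x (n + 1) = A / C`, the choice
`A² = (2 + λτ)/(λτ)` makes the damping bracket `2/τ² + λ(1 − A²C²)/τ` equal to
`(2 + λτ)(1 − C²)/τ²`, and the remaining equation is `(2 + λτ)(C² − 1)² = ω²τ²C²`, i.e. the
quartic for `C`. That quartic is palindromic, so `C = B` and `C = B⁻¹` both satisfy it, which
covers even and odd `n`.
-/

theorem discreteVanDerPol_of_period_two (τ lam ω : ℝ) {x : ℤ → ℝ} {n : ℤ}
    (hx : x (n + 2) = x n) :
    (x (n + 2) - 2 * x (n + 1) + x n) / τ ^ 2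
        - lam * (1 - x n ^ 2) * (x (n + 1) - x n) / τ + ω ^ 2 * x n
      = (x n - x (n + 1)) * (2 / τ ^ 2 + lam * (1 - x n ^ 2) / τ) + ω ^ 2 * x n := by
  rw [hx]
  ring

theorem mul_sq_sub_one_sq_inv {K : Type*} [Field K] {a b C : K}
    (h : a * (C ^ 2 - 1) ^ 2 = b * C ^ 2) :
    a * (C⁻¹ ^ 2 - 1) ^ 2 = b * C⁻¹ ^ 2 := by
  rcases eq_or_ne C 0 with rfl | hC
  · simpa using h
  · field_simp
    linear_combination h

theorem quartic_eq_zero_iff_mul_sq_sub_one_sq {K : Type*} [Field K] [NeZero (2 : K)]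
    {a c B : K} (ha : a ≠ 0) :
    B ^ 4 - 2 * (1 + c / (2 * a)) * B ^ 2 + 1 = 0 ↔ a * (B ^ 2 - 1) ^ 2 = c * B ^ 2 := by
  have hquot : B ^ 4 - 2 * (1 + c / (2 * a)) * B ^ 2 + 1
      = (a * (B ^ 2 - 1) ^ 2 - c * B ^ 2) / a := by
    field_simp
    ring
  rw [hquot, div_eq_zero_iff, sub_eq_zero, or_iff_left ha]

theorem vanDerPol_two_cycle_eq_zero {τ lam ω A C : ℝ} (hlt : 0 < lam * τ)
    (hA : A ^ 2 = (2 + lam * τ) / (lam * τ))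
    (hC : (2 + lam * τ) * (C ^ 2 - 1) ^ 2 = ω ^ 2 * τ ^ 2 * C ^ 2) :
    (A * C - A * C⁻¹) * (2 / τ ^ 2 + lam * (1 - (A * C) ^ 2) / τ) + ω ^ 2 * (A * C) = 0 := by
  rcases eq_or_ne C 0 with rfl | hC0
  · simp
  have hτ : τ ≠ 0 := by rintro rfl; simp at hlt
  have hlam : lam ≠ 0 := by rintro rfl; simp at hlt
  have hbracket : 2 / τ ^ 2 + lam * (1 - (A * C) ^ 2) / τ
      = (2 + lam * τ) * (1 - C ^ 2) / τ ^ 2 := by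
    rw [mul_pow, hA]
    field_simp
    ring
  rw [hbracket]
  field_simp
  linear_combination -A * hC

theorem vanderPol_discrete_solution_general (τ lam ω : ℝ) (hlt : 0 < lam * τ)
    (Ω A B : ℝ) (hΩ : Ω = 1 + ω ^ 2 * τ ^ 2 / (2 * (2 + lam * τ)))
    (hA : A = Real.sqrt ((2 + lam * τ) / (lam * τ)))
    (hBeq : B ^ 4 - 2 * Ω * B ^ 2 + 1 = 0)
    (x : ℤ → ℝ) (hx : ∀ n : ℤ, x n = if Even n then A * B else A / B) :
    ∀ n : ℤ,
      (x (n + 2) - 2 * x (n + 1) + x n) / τ ^ 2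
        - lam * (1 - x n ^ 2) * (x (n + 1) - x n) / τ + ω ^ 2 * x n = 0 := by
  intro n
  have hA2 : A ^ 2 = (2 + lam * τ) / (lam * τ) := by
    rw [hA, Real.sq_sqrt (div_nonneg (by linarith) hlt.le)]
  have hB : (2 + lam * τ) * (B ^ 2 - 1) ^ 2 = ω ^ 2 * τ ^ 2 * B ^ 2 :=
    (quartic_eq_zero_iff_mul_sq_sub_one_sq (by linarith)).mp (hΩ ▸ hBeq)
  have hper : x (n + 2) = x n := by simp [hx]
  rw [discreteVanDerPol_of_period_two τ lam ω hper, hx n, hx (n + 1)]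
  rcases Int.even_or_odd n with hn | hn
  · simpa [hn, Int.not_odd_iff_even.mpr hn, Int.even_add_one, div_eq_mul_inv] using
      vanDerPol_two_cycle_eq_zero hlt hA2 hB
  · simpa [hn, Int.not_even_iff_odd.mpr hn, Int.even_add_one, div_eq_mul_inv] using
      vanDerPol_two_cycle_eq_zero hlt hA2 (mul_sq_sub_one_sq_inv hB)

/-- The alternating function `x(n) = A·B` (`n` even), `x(n) = A/B` (`n` odd), with
`A = √((2+λτ)/(λτ))` and `B⁴ − 2ΩB² + 1 = 0`, solves the discrete van der Pol
equation `(x(n+2) − 2x(n+1) + x(n))/τ² − λ(1 − x(n)²)(x(n+1) − x(n))/τ + ω²x(n) = 0`. -/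
theorem vanderPol_discrete_solution (τ lam ω : ℝ) (hτ : 0 < τ) (hlt : 0 < lam * τ)
    (Ω A B : ℝ) (hΩ : Ω = 1 + ω ^ 2 * τ ^ 2 / (2 * (2 + lam * τ)))
    (hA : A = Real.sqrt ((2 + lam * τ) / (lam * τ)))
    (hB : 0 < B) (hBeq : B ^ 4 - 2 * Ω * B ^ 2 + 1 = 0)
    (x : ℤ → ℝ) (hx : ∀ n : ℤ, x n = if Even n then A * B else A / B) :
    ∀ n : ℤ,
      (x (n + 2) - 2 * x (n + 1) + x n) / τ ^ 2
        - lam * (1 - x n ^ 2) * (x (n + 1) - x n) / τ + ω ^ 2 * x n = 0 :=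
  vanderPol_discrete_solution_general τ lam ω hlt Ω A B hΩ hA hBeq x hx
end
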